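/- arXiv:1906.11481 — 3 statements merged into one kernel-verified Lean document; each statement's English description precedes it below -/
import Mathlib

section
/- Let B be an n×n real matrix all of whose complex eigenvalues have strictly negative real part. Then the matrix exponential exp(tB) tends to the zero matrix as t → ∞; consequently, for every fixed x₀ ∈ ℝⁿ, exp(tB)x₀ → 0 as t → ∞. -/
/-!
An eigenvalue `μ` of `exp A` is `exp λ` for an eigenvalue `λ` of `A`: the eigenspace of `exp A`
for `μ` is invariant under the commuting matrix `A`, so it contains an eigenvector `v` of `A`, and
`A v = λ v` gives `μ v = exp A v = exp λ v`.
Hence the spectral radius of `exp A` is `< 1`, and Gelfand's formula gives `(exp A) ^ m → 0`.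
Writing `t = s + m` with `s ∈ [0, 1]`, `exp (t A) = exp (s A) (exp A) ^ m`, whose first factor
stays bounded. A real matrix is handled by complexifying it and taking real parts.
-/

open Filter Matrix NormedSpace

open scoped Topology NNReal ENNReal

theorem Module.End.exists_hasEigenvector_of_commute {K V : Type*} [Field K] [IsAlgClosed K]
    [AddCommGroup V] [Module K V] [FiniteDimensional K V] {f g : End K V} (hfg : Commute f g)
    {μ : K} (hμ : g.HasEigenvalue μ) :
    ∃ c v, f.HasEigenvector c v ∧ g.HasEigenvector μ v := by
  have hf : Set.MapsTo f (g.eigenspace μ) (g.eigenspace μ) :=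
    mapsTo_genEigenspace_of_comm hfg.symm μ 1
  have : Nontrivial (g.eigenspace μ) := Submodule.nontrivial_iff_ne_bot.mpr hμ
  obtain ⟨c, hc⟩ := exists_eigenvalue (f.restrict hf)
  obtain ⟨w, hw⟩ := hc.exists_hasEigenvector
  have hw0 : (w : V) ≠ 0 := fun h => hw.2 (Subtype.ext h)
  exact ⟨c, w, ⟨mem_eigenspace_iff.mpr (congrArg Subtype.val hw.apply_eq_smul), hw0⟩, w.2, hw0⟩

theorem spectrum.tendsto_pow_atTop_nhds_zero_of_spectralRadius_lt_one {A : Type*} [NormedRing A]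
    [NormedAlgebra ℂ A] [CompleteSpace A] {a : A} (ha : spectralRadius ℂ a < 1) :
    Tendsto (a ^ ·) atTop (𝓝 0) := by
  obtain ⟨r, hρr, hr1⟩ := exists_between ha
  have hle : ∀ᶠ m : ℕ in atTop, (‖a ^ m‖₊ : ℝ≥0∞) ≤ r ^ m := by
    filter_upwards [(pow_nnnorm_pow_one_div_tendsto_nhds_spectralRadius a).eventually_lt_const hρr,
      eventually_ne_atTop 0] with m hm hm0
    calc (‖a ^ m‖₊ : ℝ≥0∞) = ((‖a ^ m‖₊ : ℝ≥0∞) ^ (1 / m : ℝ)) ^ m := by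
          rw [← ENNReal.rpow_mul_natCast, one_div_mul_cancel (by exact_mod_cast hm0),
            ENNReal.rpow_one]
      _ ≤ r ^ m := by gcongr
  have hnorm : Tendsto (fun m : ℕ => (‖a ^ m‖₊ : ℝ≥0∞)) atTop (𝓝 0) :=
    tendsto_of_tendsto_of_tendsto_of_le_of_le' tendsto_const_nhds
      (ENNReal.tendsto_pow_atTop_nhds_zero_of_lt_one hr1) (.of_forall fun _ => zero_le) hle
  rw [← ENNReal.coe_zero, ENNReal.tendsto_coe, ← NNReal.tendsto_coe, NNReal.coe_zero] at hnorm
  exact tendsto_zero_iff_norm_tendsto_zero.mpr hnorm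

theorem spectrum.tendsto_pow_atTop_nhds_zero_of_forall_norm_lt_one {A : Type*} [NormedRing A]
    [NormedAlgebra ℂ A] [CompleteSpace A] {a : A} (ha : ∀ z ∈ spectrum ℂ a, ‖z‖ < 1) :
    Tendsto (a ^ ·) atTop (𝓝 0) := by
  cases subsingleton_or_nontrivial A
  · simp [Subsingleton.elim _ (0 : A)]
  refine spectrum.tendsto_pow_atTop_nhds_zero_of_spectralRadius_lt_one ?_
  exact_mod_cast spectrum.spectralRadius_lt_of_forall_lt a (r := 1) fun z hz => by
    exact_mod_cast ha z hz

theorem tendsto_exp_smul_atTop_nhds_zero_of_tendsto_pow {A : Type*} [NormedRing A]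
    [NormedAlgebra ℝ A] [CompleteSpace A] {a : A} (ha : Tendsto (exp a ^ ·) atTop (𝓝 0)) :
    Tendsto (fun t : ℝ => exp (t • a)) atTop (𝓝 0) := by
  let _ : NormedAlgebra ℚ A := .restrictScalars ℚ ℝ A
  obtain ⟨M, hM⟩ := isCompact_Icc.exists_bound_of_continuousOn
    ((exp_continuous.comp (continuous_id.smul continuous_const)).continuousOn :
      ContinuousOn (fun s : ℝ => exp (s • a)) (Set.Icc 0 1))
  have hsplit : ∀ t : ℝ, exp (t • a) = exp ((t - ⌊t⌋₊) • a) * exp a ^ ⌊t⌋₊ := fun t => by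
    rw [← NormedSpace.exp_nsmul,
      ← NormedSpace.exp_add_of_commute ((Commute.refl a).smul_left _ |>.smul_right _),
      ← Nat.cast_smul_eq_nsmul ℝ, ← add_smul, sub_add_cancel]
  have hbdd : IsBoundedUnder (· ≤ ·) atTop (norm ∘ fun t : ℝ => exp ((t - ⌊t⌋₊) • a)) :=
    ⟨M, eventually_map.mpr <| (eventually_ge_atTop 0).mono fun t ht =>
      hM _ ⟨sub_nonneg.mpr (Nat.floor_le ht), by linarith [Nat.lt_floor_add_one t]⟩⟩
  exact (isBoundedUnder_le_mul_tendsto_zero hbdd (ha.comp tendsto_nat_floor_atTop)).congr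
    fun t => (hsplit t).symm

section MatrixExp

attribute [local instance] Matrix.linftyOpNormedRing Matrix.linftyOpNormedAlgebra

variable {ι : Type*} [Fintype ι] [DecidableEq ι]

theorem Matrix.map_exp {α β : Type*} [NormedRing α] [NormedAlgebra ℚ α] [CompleteSpace α]
    [NormedRing β] [Algebra ℚ β] (f : α →+* β) (hf : Continuous f) (A : Matrix ι ι α) :
    (exp A).map f = exp (A.map f) := by
  -- the entrywise completeness instance is only found up to unfolding the operator norm
  have : @CompleteSpace (Matrix ι ι α) PseudoMetricSpace.toUniformSpace :=
    Matrix.instCompleteSpace ι ι α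
  exact NormedSpace.map_exp f.mapMatrix (continuous_id.matrix_map hf) A

theorem Matrix.exp_mulVec_of_mulVec_eq_smul {𝕂 : Type*} [RCLike 𝕂] {A : Matrix ι ι 𝕂}
    {v : ι → 𝕂} {μ : 𝕂} (h : A *ᵥ v = μ • v) : exp A *ᵥ v = exp μ • v := by
  have hpow : ∀ k : ℕ, A ^ k *ᵥ v = μ ^ k • v := by
    intro k
    induction k with
    | zero => simp
    | succ k ih => rw [pow_succ', ← mulVec_mulVec, ih, mulVec_smul, h, smul_smul, ← pow_succ]
  refine ((exp_series_hasSum_exp' (𝕂 := 𝕂) A).map (mulVec.addMonoidHomLeft v)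
    (continuous_id.matrix_mulVec continuous_const)).unique ?_
  convert (exp_series_hasSum_exp' (𝕂 := 𝕂) μ).smul_const v using 1
  ext k : 1
  simp [mulVec.addMonoidHomLeft, smul_mulVec, hpow, smul_smul]

theorem Matrix.spectrum_exp_subset (A : Matrix ι ι ℂ) :
    spectrum ℂ (exp A) ⊆ Complex.exp '' spectrum ℂ A := by
  intro μ hμ
  rw [← spectrum_toLin', ← Module.End.hasEigenvalue_iff_mem_spectrum] at hμ
  obtain ⟨c, v, hAv, hexpAv⟩ := Module.End.exists_hasEigenvector_of_commute
    ((Commute.refl A).exp_right.map toLinAlgEquiv') hμ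
  refine ⟨c, ?_, ?_⟩
  · rw [← spectrum_toLin', ← Module.End.hasEigenvalue_iff_mem_spectrum]
    exact Module.End.hasEigenvalue_of_hasEigenvector hAv
  · have hexp := exp_mulVec_of_mulVec_eq_smul (by simpa using hAv.apply_eq_smul)
    rw [Complex.exp_eq_exp_ℂ]
    refine smul_left_injective ℂ hexpAv.2 ?_
    simpa [← hexp] using hexpAv.apply_eq_smul

theorem Matrix.tendsto_exp_smul_atTop_nhds_zero {A : Matrix ι ι ℂ}
    (hA : ∀ μ ∈ spectrum ℂ A, μ.re < 0) : Tendsto (fun t : ℝ => exp (t • A)) atTop (𝓝 0) := by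
  refine tendsto_exp_smul_atTop_nhds_zero_of_tendsto_pow <|
    spectrum.tendsto_pow_atTop_nhds_zero_of_forall_norm_lt_one ?_
  rintro _ hz
  obtain ⟨c, hc, rfl⟩ := spectrum_exp_subset A hz
  rw [Complex.norm_exp]
  exact Real.exp_lt_one_iff.mpr (hA c hc)

end MatrixExp

/-- If every complex eigenvalue of the real matrix `B` has strictly
negative real part, then the matrix exponential `exp (t • B)` tends to the zero matrix
as `t → ∞`; consequently, for every fixed `x₀ ∈ ℝⁿ`, `exp (t • B) x₀ → 0` as `t → ∞`. -/
theorem matrix_exp_tendsto_zero_of_eigenvalues_neg_re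
    (n : ℕ) (B : Matrix (Fin n) (Fin n) ℝ)
    (hB : ∀ μ ∈ spectrum ℂ (B.map (algebraMap ℝ ℂ)), μ.re < 0) :
    Tendsto (fun t : ℝ => exp (t • B)) atTop (nhds 0) ∧
    ∀ x₀ : Fin n → ℝ,
      Tendsto (fun t : ℝ => (exp (t • B)).mulVec x₀) atTop (nhds 0) := by
  have hre : ∀ t : ℝ, exp (t • B) = (exp (t • B.map (algebraMap ℝ ℂ))).map Complex.re := by
    intro t
    have hsmul : t • B.map (algebraMap ℝ ℂ) = (t • B).map (algebraMap ℝ ℂ) := by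
      ext
      simp
    rw [hsmul, ← Matrix.map_exp _ (continuous_algebraMap ℝ ℂ)]
    ext
    simp
  have hB' : Tendsto (fun t : ℝ => exp (t • B)) atTop (𝓝 0) := by
    simpa [hre, Function.comp_def] using
      ((continuous_id.matrix_map Complex.continuous_re).tendsto 0).comp
        (tendsto_exp_smul_atTop_nhds_zero hB)
  refine ⟨hB', fun x₀ => ?_⟩
  simpa [Function.comp_def] using
    ((continuous_id.matrix_mulVec continuous_const).tendsto 0).comp hB'
end

section
/- With q₁, q₂ ≥ 0, ε₁, ε₂ > 0, τ = −(ε₁+ε₂+q₁+q₂), d = ε₁ε₂+ε₂q₁+ε₁q₂, and C* = (1/(2τ))·[[d+ε₁², d+ε₁ε₂],[d+ε₁ε₂, d+ε₂²]], one has det(C*) = d(ε₁−ε₂)²/(4τ²). Consequently C* is invertible if and only if ε₁ ≠ ε₂; and when ε₁ = ε₂, the vector (1, −1)ᵀ lies in the kernel of C* (the stationary covariance is degenerate and the stationary distribution collapses onto the one-dimensional synchronization manifold X¹ = X²). -/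
open Matrix

namespace Matrix

variable {R : Type*} [CommRing R]

/-- The matrix is `d • 𝟙𝟙ᵀ + v vᵀ` with `v = (a, b)`, so its determinant and its action on
`(1, -1)` only see the difference `a - b`. -/
theorem det_fin_two_const_add_outer_self (d a b : R) :
    !![d + a ^ 2, d + a * b; d + a * b, d + b ^ 2].det = d * (a - b) ^ 2 := by
  rw [det_fin_two_of]
  ring

theorem mulVec_fin_two_const_add_outer_self_one_neg_one (d a b : R) :
    !![d + a ^ 2, d + a * b; d + a * b, d + b ^ 2] *ᵥ ![1, -1] = (a - b) • ![a, b] := by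
  ext i
  fin_cases i <;>
    simp only [mulVec, dotProduct, Fin.sum_univ_two, of_apply, cons_val', cons_val_fin_one,
      cons_val_zero, cons_val_one, Pi.smul_apply, smul_eq_mul, Fin.zero_eta, Fin.mk_one] <;> ring

end Matrix

/-- With `q₁, q₂ ≥ 0`, `ε₁, ε₂ > 0`, `τ = −(ε₁+ε₂+q₁+q₂)`,
`d = ε₁ε₂+ε₂q₁+ε₁q₂`, and `C* = (1/(2τ))·[[d+ε₁², d+ε₁ε₂],[d+ε₁ε₂, d+ε₂²]]`, one has
`det C* = d(ε₁−ε₂)²/(4τ²)`. Consequently `C*` is invertible iff `ε₁ ≠ ε₂`; and when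
`ε₁ = ε₂` the vector `(1, −1)ᵀ` lies in the kernel of `C*` (the stationary covariance is
degenerate and the stationary distribution collapses onto the synchronization manifold
`X¹ = X²`). -/
theorem two_agent_covariance_det_and_degeneracy
    (q₁ q₂ ε₁ ε₂ : ℝ) (hq₁ : 0 ≤ q₁) (hq₂ : 0 ≤ q₂) (hε₁ : 0 < ε₁) (hε₂ : 0 < ε₂)
    (τ d : ℝ)
    (hτ : τ = -(ε₁ + ε₂ + q₁ + q₂)) (hd : d = ε₁ * ε₂ + ε₂ * q₁ + ε₁ * q₂)
    (Cstar : Matrix (Fin 2) (Fin 2) ℝ)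
    (hC : Cstar = (1 / (2 * τ)) •
      !![d + ε₁ ^ 2, d + ε₁ * ε₂; d + ε₁ * ε₂, d + ε₂ ^ 2]) :
    Cstar.det = d * (ε₁ - ε₂) ^ 2 / (4 * τ ^ 2) ∧
    (IsUnit Cstar ↔ ε₁ ≠ ε₂) ∧
    (ε₁ = ε₂ → Cstar.mulVec ![1, -1] = 0) := by
  have hτ_neg : τ < 0 := by rw [hτ]; linarith
  have hd_pos : 0 < d := by rw [hd]; positivity
  have hdet : Cstar.det = d * (ε₁ - ε₂) ^ 2 / (4 * τ ^ 2) := by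
    rw [hC, det_smul, Fintype.card_fin, det_fin_two_const_add_outer_self]
    ring
  refine ⟨hdet, ?_, fun hε => ?_⟩
  · rw [isUnit_iff_isUnit_det, isUnit_iff_ne_zero, hdet]
    simp [hd_pos.ne', hτ_neg.ne, sub_eq_zero]
  · rw [hC, smul_mulVec, mulVec_fin_two_const_add_outer_self_one_neg_one, hε, sub_self,
      zero_smul, smul_zero]
end

section
/- Let q₁, q₂ ≥ 0, ε₁, ε₂ > 0 with ε₁ ≠ ε₂, let B = [[−q₁−ε₁, q₁],[q₂, −q₂−ε₂]], D the matrix with entries D_{ij} = εᵢεⱼ, τ = tr(B), d = det(B), and C* = (1/(2τ))·[[d+ε₁², d+ε₁ε₂],[d+ε₁ε₂, d+ε₂²]] (which is invertible since ε₁ ≠ ε₂). Define the stationary Gaussian density p(x) = exp(−½ xᵀ(C*)⁻¹x) and the stationary probability flux J(x) = (Bx)·p(x) − ½ D ∇p(x) for x ∈ ℝ². Then detailed balance is broken: J is not identically zero, i.e. there exists x ∈ ℝ² with J(x) ≠ 0. -/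
open Matrix

/-- In the two-agent model with a common noise and distinct learning
rates `ε₁ ≠ ε₂`, with drift `B = [[−q₁−ε₁, q₁],[q₂, −q₂−ε₂]]`, noise correlation
`D_{ij} = εᵢεⱼ`, and (invertible) stationary covariance
`C* = (1/(2τ))·[[d+ε₁², d+ε₁ε₂],[d+ε₁ε₂, d+ε₂²]]`, the stationary probability flux
`J(x) = (Bx)·p(x) − ½ D ∇p(x)` of the stationary Gaussian density
`p(x) = exp(−½ xᵀ(C*)⁻¹x)` does not vanish identically: detailed balance is broken. -/
theorem two_agent_broken_detailed_balance
    (q₁ q₂ ε₁ ε₂ : ℝ) (hq₁ : 0 ≤ q₁) (hq₂ : 0 ≤ q₂) (hε₁ : 0 < ε₁) (hε₂ : 0 < ε₂)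
    (hne : ε₁ ≠ ε₂)
    (B D Cstar : Matrix (Fin 2) (Fin 2) ℝ)
    (hB : B = !![-q₁ - ε₁, q₁; q₂, -q₂ - ε₂])
    (hD : D = !![ε₁ * ε₁, ε₁ * ε₂; ε₂ * ε₁, ε₂ * ε₂])
    (τ d : ℝ)
    (hτ : τ = -(ε₁ + ε₂ + q₁ + q₂)) (hd : d = ε₁ * ε₂ + ε₂ * q₁ + ε₁ * q₂)
    (hC : Cstar = (1 / (2 * τ)) •
      !![d + ε₁ ^ 2, d + ε₁ * ε₂; d + ε₁ * ε₂, d + ε₂ ^ 2])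
    (p : (Fin 2 → ℝ) → ℝ)
    (hp : ∀ x, p x = Real.exp (-(1 / 2) * (x ⬝ᵥ Cstar⁻¹.mulVec x)))
    (J : (Fin 2 → ℝ) → Fin 2 → ℝ)
    (hJ : ∀ x, J x = p x • B.mulVec x -
      (1 / 2 : ℝ) • D.mulVec (fun i => fderiv ℝ p x (Pi.single i 1))) :
    ∃ x : Fin 2 → ℝ, J x ≠ 0 := by
  by_contra h
  push_neg at h
  set x : Fin 2 → ℝ := ![1, 0] with hxdef
  have hx := h x
  have hPpos : 0 < p x := by rw [hp]; exact Real.exp_pos _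
  rw [hJ] at hx
  set g : Fin 2 → ℝ := fun i => fderiv ℝ p x (Pi.single i 1) with hg
  have e0 := congrFun hx 0
  have e1 := congrFun hx 1
  simp [hB, hD, Matrix.mulVec, dotProduct, Fin.sum_univ_two, hxdef,
    Matrix.cons_val_zero, Matrix.cons_val_one, Matrix.head_cons,
    Pi.smul_apply, Pi.sub_apply, smul_eq_mul, sub_eq_zero] at e0 e1
  nlinarith [mul_pos hε₁ hε₂, mul_nonneg hq₂ hε₁.le, mul_nonneg hq₁ hε₂.le,
    mul_pos hPpos (mul_pos hε₁ hε₂), mul_nonneg hPpos.le (mul_nonneg hq₂ hε₁.le),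
    mul_nonneg hPpos.le (mul_nonneg hq₁ hε₂.le)]
end
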